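/- arXiv:1004.5203 — 3 statements merged into one kernel-verified Lean document; each statement's English description precedes it below -/
import Mathlib

section
/- For all real numbers x, y, z with sinh(2x) sinh(2y) sinh(2z) ≠ 0, one has 1 - σ(x,y,z) + σ(z,y,x) + σ(x,z,y) = 4 sinh(x+y+z) sinh(-x+y+z) sinh(x-y+z) cosh(x+y-z) / (sinh 2x sinh 2y sinh 2z), where σ(a,b,c) = (cosh 2a cosh 2b - cosh 2c)/(sinh 2a sinh 2b). -/
noncomputable def sigma2 (a b c : ℝ) : ℝ :=
  (Real.cosh (2 * a) * Real.cosh (2 * b) - Real.cosh (2 * c)) /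
    (Real.sinh (2 * a) * Real.sinh (2 * b))

theorem rho_identity_double (x y z : ℝ)
    (h : Real.sinh (2 * x) * Real.sinh (2 * y) * Real.sinh (2 * z) ≠ 0) :
    1 - sigma2 x y z + sigma2 z y x + sigma2 x z y =
      4 * Real.sinh (x + y + z) * Real.sinh (-x + y + z) * Real.sinh (x - y + z) *
          Real.cosh (x + y - z) /
        (Real.sinh (2 * x) * Real.sinh (2 * y) * Real.sinh (2 * z)) := by
  have hx : Real.sinh (2 * x) ≠ 0 := fun h' => h (by rw [h']; ring)
  have hy : Real.sinh (2 * y) ≠ 0 := fun h' => h (by rw [h']; ring)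
  have hz : Real.sinh (2 * z) ≠ 0 := fun h' => h (by rw [h']; ring)
  unfold sigma2
  field_simp
  have ex := Real.exp_ne_zero x
  have ey := Real.exp_ne_zero y
  have ez := Real.exp_ne_zero z
  simp only [Real.sinh_eq, Real.cosh_eq, Real.exp_add, Real.exp_neg, two_mul,
    sub_eq_add_neg, neg_add, Real.exp_add, neg_neg]
  field_simp
  ring
end

section
/- For x, y, z real with sinh x sinh y sinh z ≠ 0, one has 1 − σ^π(x,y,z) + σ^π(x,z,y) + σ^π(z,y,x) = 4 cosh((x+y+z)/2) cosh((−x+y+z)/2) cosh((x−y+z)/2) sinh((x+y−z)/2) / (sinh x sinh y sinh z), where σ^π(a,b,c) = (cosh a cosh b + cosh c)/(sinh a sinh b). -/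
/-! Product-to-sum turns the numerator on the right into
`(cosh x + cosh (y + z)) * (sinh x + sinh (y - z))`; after clearing the denominator
`sinh x * sinh y * sinh z`, the two sides then agree modulo `cosh² - sinh² = 1`. -/

noncomputable def sigmaPi (a b c : ℝ) : ℝ :=
  (Real.cosh a * Real.cosh b + Real.cosh c) / (Real.sinh a * Real.sinh b)

open Real

lemma two_mul_cosh_mul_cosh (a b : ℝ) : 2 * cosh a * cosh b = cosh (a + b) + cosh (a - b) := by
  rw [cosh_add, cosh_sub]; ring

lemma two_mul_cosh_mul_sinh (a b : ℝ) : 2 * cosh a * sinh b = sinh (b + a) + sinh (b - a) := by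
  rw [sinh_add, sinh_sub]; ring

lemma four_mul_cosh_half_mul_cosh_half_mul_cosh_half_mul_sinh_half (x y z : ℝ) :
    4 * cosh ((x + y + z) / 2) * cosh ((-x + y + z) / 2) * cosh ((x - y + z) / 2) *
        sinh ((x + y - z) / 2) =
      (cosh x + cosh (y + z)) * (sinh x + sinh (y - z)) := by
  calc _ = (2 * cosh ((x + y + z) / 2) * cosh ((-x + y + z) / 2)) *
        (2 * cosh ((x - y + z) / 2) * sinh ((x + y - z) / 2)) := by ring
    _ = _ := by
      rw [two_mul_cosh_mul_cosh, two_mul_cosh_mul_sinh]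
      ring_nf

lemma sigmaPi_numerators_eq_cosh_add_cosh_mul_sinh_add_sinh (x y z : ℝ) :
    sinh x * sinh y * sinh z - sinh z * (cosh x * cosh y + cosh z) +
        sinh y * (cosh x * cosh z + cosh y) + sinh x * (cosh z * cosh y + cosh x) =
      (cosh x + cosh (y + z)) * (sinh x + sinh (y - z)) := by
  rw [cosh_add, sinh_sub]
  linear_combination (-sinh y * cosh y) * cosh_sq_sub_sinh_sq z +
    (sinh z * cosh z) * cosh_sq_sub_sinh_sq y

theorem rho_pi_identity (x y z : ℝ)
    (h : Real.sinh x * Real.sinh y * Real.sinh z ≠ 0) :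
    1 - sigmaPi x y z + sigmaPi x z y + sigmaPi z y x =
      4 * Real.cosh ((x + y + z) / 2) * Real.cosh ((-x + y + z) / 2) *
          Real.cosh ((x - y + z) / 2) * Real.sinh ((x + y - z) / 2) /
        (Real.sinh x * Real.sinh y * Real.sinh z) := by
  have hx : sinh x ≠ 0 := left_ne_zero_of_mul (left_ne_zero_of_mul h)
  have hy : sinh y ≠ 0 := right_ne_zero_of_mul (left_ne_zero_of_mul h)
  have hz : sinh z ≠ 0 := right_ne_zero_of_mul h
  rw [four_mul_cosh_half_mul_cosh_half_mul_cosh_half_mul_sinh_half,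
    ← sigmaPi_numerators_eq_cosh_add_cosh_mul_sinh_add_sinh]
  unfold sigmaPi
  field_simp
end

section
/- Let α ≥ β ≥ −1/2 with α > −1/2, ρ = α+β+1, and let G_0 be the real-valued function G_0(x) = φ_0(x) + (ρ/(2(α+1))) sinh x cosh x · φ̃_0(x), where φ_0(x) = (cosh x)^{−ρ} ₂F₁(ρ/2, (α−β+1)/2; α+1; tanh²x) and φ̃_0(x) = (cosh x)^{−ρ−2} ₂F₁(ρ/2 + 1, (α−β+1)/2; α+2; tanh²x). Then G_0(x) > 0 for all x ∈ ℝ. -/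
/-!
Put `A = ρ/2`, `B = (α - β + 1)/2`, `C = α + 1` and `t = tanh x`, so that `0 < A < C`, `0 < B`
and `|t| < 1`. Pulling out `(cosh x)^(-ρ)`, the function is `F(A,B;C;t²) + (A/C) t F(A+1,B;C+1;t²)`.
Termwise, `(A/C)` times the `n`-th term of `F(A+1,B;C+1;·)` is `(A+n)/(C+n) ≤ 1` times the `n`-th
term of `F(A,B;C;·)`, with strict inequality at `n = 0`; all terms being nonnegative, this gives
`(A/C) F(A+1,B;C+1;t²) < F(A,B;C;t²)`, and `t > -1` finishes the proof.
-/

noncomputable def rpoch (a : ℝ) (k : ℕ) : ℝ := (ascPochhammer ℝ k).eval a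

/-- Gauss hypergeometric series ₂F₁(a,b;c;z) of real arguments. -/
noncomputable def rhyp2F1 (a b c z : ℝ) : ℝ :=
  ∑' n : ℕ, rpoch a n * rpoch b n / (rpoch c n * (n.factorial : ℝ)) * z ^ n

open Nat

lemma rpoch_pos {a : ℝ} (ha : 0 < a) (n : ℕ) : 0 < rpoch a n :=
  ascPochhammer_pos n a ha

lemma mul_rpoch_add_one (a : ℝ) (n : ℕ) : a * rpoch (a + 1) n = rpoch a n * (a + n) := by
  rw [rpoch, rpoch, ← ascPochhammer_succ_eval]
  simp [ascPochhammer_succ_left, Polynomial.eval_comp]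

noncomputable def rhyp2F1Term (a b c z : ℝ) (n : ℕ) : ℝ :=
  rpoch a n * rpoch b n / (rpoch c n * (n ! : ℝ)) * z ^ n

lemma rhyp2F1_eq_tsum (a b c z : ℝ) : rhyp2F1 a b c z = ∑' n, rhyp2F1Term a b c z n := rfl

lemma rhyp2F1Term_zero (a b c z : ℝ) : rhyp2F1Term a b c z 0 = 1 := by
  simp [rhyp2F1Term, rpoch]

lemma rhyp2F1Term_nonneg {a b c z : ℝ} (ha : 0 < a) (hb : 0 < b) (hc : 0 < c) (hz : 0 ≤ z)
    (n : ℕ) :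
    0 ≤ rhyp2F1Term a b c z n := by
  have := rpoch_pos ha n
  have := rpoch_pos hb n
  have := rpoch_pos hc n
  unfold rhyp2F1Term
  positivity

lemma rhyp2F1Term_eq_ordinaryHypergeometricSeries (a b c z : ℝ) (n : ℕ) :
    rhyp2F1Term a b c z n = ordinaryHypergeometricSeries ℝ a b c n (fun _ => z) := by
  rw [ordinaryHypergeometricSeries_apply_eq, smul_eq_mul, rhyp2F1Term, rpoch, rpoch, rpoch]
  ring

lemma summable_rhyp2F1Term {a b c z : ℝ} (ha : 0 < a) (hb : 0 < b) (hc : 0 < c) (hz : |z| < 1) :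
    Summable (rhyp2F1Term a b c z) := by
  have hradius : (ordinaryHypergeometricSeries ℝ a b c).radius = 1 :=
    ordinaryHypergeometricSeries_radius_eq_one ℝ a b c fun k => by
      refine ⟨?_, ?_, ?_⟩ <;> linarith [k.cast_nonneg (α := ℝ)]
  have hzball : z ∈ Metric.eball (0 : ℝ) (ordinaryHypergeometricSeries ℝ a b c).radius := by
    simpa [hradius, Real.enorm_eq_ofReal_abs] using hz
  simpa only [← rhyp2F1Term_eq_ordinaryHypergeometricSeries] using
    ((ordinaryHypergeometricSeries ℝ a b c).summable_norm_apply hzball).of_norm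

lemma rhyp2F1Term_div_mul_add_one (a b c z : ℝ) (n : ℕ) :
    a / c * rhyp2F1Term (a + 1) b (c + 1) z n = (a + n) / (c + n) * rhyp2F1Term a b c z n := by
  calc a / c * rhyp2F1Term (a + 1) b (c + 1) z n
      = a * rpoch (a + 1) n * rpoch b n / (c * rpoch (c + 1) n * (n ! : ℝ)) * z ^ n := by
        unfold rhyp2F1Term; ring
    _ = rpoch a n * (a + n) * rpoch b n / (rpoch c n * (c + n) * (n ! : ℝ)) * z ^ n := by
        rw [mul_rpoch_add_one, mul_rpoch_add_one]
    _ = (a + n) / (c + n) * rhyp2F1Term a b c z n := by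
        unfold rhyp2F1Term
        -- `ring` does not split the inverse of a product containing the sum `c + n`
        generalize c + n = d
        ring

lemma rhyp2F1_nonneg {a b c z : ℝ} (ha : 0 < a) (hb : 0 < b) (hc : 0 < c) (hz : 0 ≤ z) :
    0 ≤ rhyp2F1 a b c z :=
  tsum_nonneg (rhyp2F1Term_nonneg ha hb hc hz)

lemma div_mul_rhyp2F1_add_one_lt {a b c z : ℝ} (ha : 0 < a) (hb : 0 < b) (hac : a < c)
    (hz₀ : 0 ≤ z) (hz₁ : z < 1) :
    a / c * rhyp2F1 (a + 1) b (c + 1) z < rhyp2F1 a b c z := by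
  have hc : 0 < c := ha.trans hac
  rw [rhyp2F1_eq_tsum, rhyp2F1_eq_tsum, ← tsum_mul_left]
  refine Summable.tsum_lt_tsum_of_nonneg (i := 0)
    (fun n => mul_nonneg (div_pos ha hc).le
      (rhyp2F1Term_nonneg (by linarith) hb (by linarith) hz₀ n))
    (fun n => ?_) ?_ (summable_rhyp2F1Term ha hb hc (abs_lt.2 ⟨by linarith, hz₁⟩))
  · rw [rhyp2F1Term_div_mul_add_one]
    refine mul_le_of_le_one_left (rhyp2F1Term_nonneg ha hb hc hz₀ n) ?_
    exact (div_le_one (by positivity)).2 (by linarith)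
  · simpa [rhyp2F1Term_zero] using (div_lt_one hc).2 hac

lemma Real.sinh_mul_cosh_mul_cosh_rpow_sub_two (x s : ℝ) :
    Real.sinh x * Real.cosh x * Real.cosh x ^ (s - 2) = Real.tanh x * Real.cosh x ^ s := by
  have hcosh := Real.cosh_pos x
  rw [Real.rpow_sub hcosh, Real.rpow_two, Real.tanh_eq_sinh_div_cosh]
  field_simp

theorem opdam_G0_pos (α β : ℝ) (h1 : α ≥ β) (h2 : β ≥ -(1/2)) (h3 : α > -(1/2)) (x : ℝ) :
    0 <
      Real.cosh x ^ (-(α + β + 1)) *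
          rhyp2F1 ((α + β + 1) / 2) ((α - β + 1) / 2) (α + 1) (Real.tanh x ^ 2) +
        ((α + β + 1) / (2 * (α + 1))) * Real.sinh x * Real.cosh x *
          (Real.cosh x ^ (-(α + β + 1) - 2) *
            rhyp2F1 ((α + β + 1) / 2 + 1) ((α - β + 1) / 2) (α + 2) (Real.tanh x ^ 2)) := by
  set F₁ := rhyp2F1 ((α + β + 1) / 2) ((α - β + 1) / 2) (α + 1) (Real.tanh x ^ 2)
  set F₂ := rhyp2F1 ((α + β + 1) / 2 + 1) ((α - β + 1) / 2) (α + 2) (Real.tanh x ^ 2)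
  set c := (α + β + 1) / 2 / (α + 1)
  have hF₂ : 0 ≤ F₂ := rhyp2F1_nonneg (by linarith) (by linarith) (by linarith) (sq_nonneg _)
  have hc : 0 ≤ c := div_nonneg (by linarith) (by linarith)
  have hlt : c * F₂ < F₁ := by
    have := div_mul_rhyp2F1_add_one_lt (a := (α + β + 1) / 2) (b := (α - β + 1) / 2) (c := α + 1)
      (by linarith) (by linarith) (by linarith) (sq_nonneg _) (Real.tanh_sq_lt_one x)
    rwa [show α + 1 + 1 = α + 2 by ring] at this
  have hG : Real.cosh x ^ (-(α + β + 1)) * F₁ +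
        ((α + β + 1) / (2 * (α + 1))) * Real.sinh x * Real.cosh x *
          (Real.cosh x ^ (-(α + β + 1) - 2) * F₂)
      = Real.cosh x ^ (-(α + β + 1)) * (F₁ + c * Real.tanh x * F₂) := by
    rw [← div_div]
    calc _ = Real.cosh x ^ (-(α + β + 1)) * F₁ +
          c * (Real.sinh x * Real.cosh x * Real.cosh x ^ (-(α + β + 1) - 2)) * F₂ := by ring
      _ = _ := by rw [Real.sinh_mul_cosh_mul_cosh_rpow_sub_two]; ring
  rw [hG]
  refine mul_pos (Real.rpow_pos_of_pos (Real.cosh_pos x) _) ?_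
  have htanh : 0 ≤ Real.tanh x + 1 := by linarith [Real.neg_one_lt_tanh x]
  linarith [mul_nonneg (mul_nonneg hc hF₂) htanh]
end
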